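/- Let A be the n×n 1-2-1 block matrix with blocks of sizes r, s, t (entries: 0 within and between the first two blocks off pattern, 1 between second and third blocks, 2 within the third block, following pattern [[0,0,0],[0,0,1],[0,1,2]]), and let B be the two-block cut matrix with blocks of sizes u ≤ v (entries 0 within blocks, 1 between blocks), with r+s+t = u+v = n. Then the identity permutation minimizes Z_π(A,B) over all permutations π. -/

import Mathlib

/-- QAP objective value. -/
def Z {n : ℕ} (A B : Matrix (Fin n) (Fin n) ℝ) (π : Equiv.Perm (Fin n)) : ℝ :=
  ∑ i, ∑ j, A (π i) (π j) * B i j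

/-- Block index (0, 1 or 2) of a row/column `i` for the three-interval partition with
the first two intervals of sizes `r` and `s`. -/
def blk (r s : ℕ) {n : ℕ} (i : Fin n) : ℕ :=
  if (i : ℕ) < r then 0 else if (i : ℕ) < r + s then 1 else 2

/-- The 1-2-1 pattern `[[0,0,0],[0,0,1],[0,1,2]]` evaluated at block indices. -/
def pat (k l : ℕ) : ℝ :=
  if k = 2 ∧ l = 2 then 2 else if (k = 1 ∧ l = 2) ∨ (k = 2 ∧ l = 1) then 1 else 0

lemma blk_mem (r s : ℕ) {n : ℕ} (i : Fin n) : blk r s i = 0 ∨ blk r s i = 1 ∨ blk r s i = 2 := by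
  unfold blk; split_ifs <;> simp

lemma blk_eq_one (r s : ℕ) {n : ℕ} (i : Fin n) : blk r s i = 1 ↔ r ≤ (i:ℕ) ∧ (i:ℕ) < r + s := by
  unfold blk; split_ifs <;> simp <;> omega

lemma blk_eq_two (r s : ℕ) {n : ℕ} (i : Fin n) : blk r s i = 2 ↔ r + s ≤ (i:ℕ) := by
  unfold blk; split_ifs <;> simp <;> omega

lemma blk_eq_zero (r s : ℕ) {n : ℕ} (i : Fin n) : blk r s i = 0 ↔ (i:ℕ) < r := by
  unfold blk; split_ifs <;> simp <;> omega

lemma card_filter_fin (n : ℕ) (p : ℕ → Prop) [DecidablePred p] :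
    (Finset.univ.filter (fun i : Fin n => p i.val)).card = ((Finset.range n).filter p).card := by
  rw [Finset.card_filter, Finset.card_filter, Fin.sum_univ_eq_sum_range (fun k => if p k then 1 else 0)]

lemma card_ico_fin (n lo hi : ℕ) (h : hi ≤ n) :
    (Finset.univ.filter (fun i : Fin n => lo ≤ i.val ∧ i.val < hi)).card = hi - lo := by
  have h2 : ((Finset.range n).filter (fun k => lo ≤ k ∧ k < hi)) = Finset.Ico lo hi := by
    ext k; simp only [Finset.mem_filter, Finset.mem_range, Finset.mem_Ico]; omega
  have h1 := card_filter_fin n (fun k => lo ≤ k ∧ k < hi)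
  rw [h2, Nat.card_Ico] at h1
  exact h1


lemma perm_card {n : ℕ} (π : Equiv.Perm (Fin n)) (p : Fin n → Prop) [DecidablePred p] :
    (Finset.univ.filter (fun i => p (π i))).card = (Finset.univ.filter p).card := by
  rw [Finset.card_filter, Finset.card_filter]
  exact Equiv.sum_comp π (fun x => if p x then 1 else 0)

lemma filter_split_card {n : ℕ} (u : ℕ) (p : Fin n → Prop) [DecidablePred p] :
    (Finset.univ.filter (fun i => p i ∧ (i:ℕ) < u)).card
      + (Finset.univ.filter (fun i => p i ∧ ¬ (i:ℕ) < u)).card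
      = (Finset.univ.filter p).card := by
  rw [Finset.card_filter, Finset.card_filter, Finset.card_filter, ← Finset.sum_add_distrib]
  apply Finset.sum_congr rfl
  intro i _
  by_cases hp : p i <;> by_cases hi : (i:ℕ) < u <;> simp [hp, hi]

lemma Zval {n : ℕ} (r s u : ℕ) (A B : Matrix (Fin n) (Fin n) ℝ)
    (hA : ∀ i j, A i j = pat (blk r s i) (blk r s j))
    (hB : ∀ i j : Fin n, B i j = if ((i : ℕ) < u ↔ (j : ℕ) < u) then 0 else 1)
    (π : Equiv.Perm (Fin n)) :
    Z A B π = 2 * (((Finset.univ.filter (fun i : Fin n => blk r s (π i) = 1 ∧ (i:ℕ) < u)).card : ℝ)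
        * ((Finset.univ.filter (fun i : Fin n => blk r s (π i) = 2 ∧ ¬ (i:ℕ) < u)).card : ℝ)
      + ((Finset.univ.filter (fun i : Fin n => blk r s (π i) = 1 ∧ ¬ (i:ℕ) < u)).card : ℝ)
        * ((Finset.univ.filter (fun i : Fin n => blk r s (π i) = 2 ∧ (i:ℕ) < u)).card : ℝ)
      + 2 * (((Finset.univ.filter (fun i : Fin n => blk r s (π i) = 2 ∧ (i:ℕ) < u)).card : ℝ)
        * ((Finset.univ.filter (fun i : Fin n => blk r s (π i) = 2 ∧ ¬ (i:ℕ) < u)).card : ℝ))) := by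
  have point : ∀ i j : Fin n, A (π i) (π j) * B i j =
      (if blk r s (π i) = 1 ∧ (i:ℕ) < u then (1:ℝ) else 0) * (if blk r s (π j) = 2 ∧ ¬ (j:ℕ) < u then (1:ℝ) else 0)
    + (if blk r s (π i) = 1 ∧ ¬ (i:ℕ) < u then (1:ℝ) else 0) * (if blk r s (π j) = 2 ∧ (j:ℕ) < u then (1:ℝ) else 0)
    + (if blk r s (π i) = 2 ∧ (i:ℕ) < u then (1:ℝ) else 0) * (if blk r s (π j) = 1 ∧ ¬ (j:ℕ) < u then (1:ℝ) else 0)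
    + (if blk r s (π i) = 2 ∧ ¬ (i:ℕ) < u then (1:ℝ) else 0) * (if blk r s (π j) = 1 ∧ (j:ℕ) < u then (1:ℝ) else 0)
    + 2 * ((if blk r s (π i) = 2 ∧ (i:ℕ) < u then (1:ℝ) else 0) * (if blk r s (π j) = 2 ∧ ¬ (j:ℕ) < u then (1:ℝ) else 0))
    + 2 * ((if blk r s (π i) = 2 ∧ ¬ (i:ℕ) < u then (1:ℝ) else 0) * (if blk r s (π j) = 2 ∧ (j:ℕ) < u then (1:ℝ) else 0)) := by
    intro i j
    rw [hA, hB]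
    rcases blk_mem r s (π i) with h1 | h1 | h1 <;>
      rcases blk_mem r s (π j) with h2 | h2 | h2 <;>
      by_cases hi : (i:ℕ) < u <;> by_cases hj : (j:ℕ) < u <;>
      simp [pat, h1, h2, hi, hj]
  unfold Z
  simp only [point]
  simp only [Finset.sum_add_distrib, ← Finset.mul_sum, ← Finset.sum_mul]
  simp only [Finset.sum_boole]
  push_cast
  ring_nf


set_option maxHeartbeats 2000000 in
theorem stmt16 {n : ℕ} (r s t u v : ℕ)
    (hrst : r + s + t = n) (huv : u + v = n) (huv' : u ≤ v)
    (A B : Matrix (Fin n) (Fin n) ℝ)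
    (hA : ∀ i j, A i j = pat (blk r s i) (blk r s j))
    (hB : ∀ i j : Fin n, B i j = if ((i : ℕ) < u ↔ (j : ℕ) < u) then 0 else 1) :
    ∀ π : Equiv.Perm (Fin n), Z A B (Equiv.refl (Fin n)) ≤ Z A B π := by
  intro π
  have hun : u ≤ n := by omega
  have hrsn : r + s ≤ n := by omega
  have htot1' : (Finset.univ.filter (fun i : Fin n => blk r s i = 1)).card = s := by
    have heq : (Finset.univ.filter (fun i : Fin n => blk r s i = 1))
        = Finset.univ.filter (fun i : Fin n => r ≤ i.val ∧ i.val < r + s) := by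
      apply Finset.filter_congr; intro i _; simpa using blk_eq_one r s i
    rw [heq, card_ico_fin n r (r+s) hrsn]; omega
  have htot2' : (Finset.univ.filter (fun i : Fin n => blk r s i = 2)).card = t := by
    have heq : (Finset.univ.filter (fun i : Fin n => blk r s i = 2))
        = Finset.univ.filter (fun i : Fin n => r + s ≤ i.val ∧ i.val < n) := by
      apply Finset.filter_congr; intro i _
      rw [blk_eq_two r s i]
      have := i.isLt
      constructor
      · intro h; exact ⟨h, this⟩
      · intro h; exact h.1
    rw [heq, card_ico_fin n (r+s) n le_rfl]; omega
  have htot0' : (Finset.univ.filter (fun i : Fin n => blk r s i = 0)).card = r := by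
    have heq : Finset.univ.filter (fun i : Fin n => blk r s i = 0)
        = Finset.univ.filter (fun i : Fin n => 0 ≤ i.val ∧ i.val < r) := by
      apply Finset.filter_congr; intro i _
      rw [blk_eq_zero r s i]
      omega
    rw [heq, card_ico_fin n 0 r (by omega)]; omega
  have htot1 : (Finset.univ.filter (fun i : Fin n => blk r s (π i) = 1)).card = s :=
    (perm_card π (fun x : Fin n => blk r s x = 1)).trans htot1'
  have htot2 : (Finset.univ.filter (fun i : Fin n => blk r s (π i) = 2)).card = t :=
    (perm_card π (fun x : Fin n => blk r s x = 2)).trans htot2'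
  have htot0 : (Finset.univ.filter (fun i : Fin n => blk r s (π i) = 0)).card = r :=
    (perm_card π (fun x : Fin n => blk r s x = 0)).trans htot0'
  have htotL : (Finset.univ.filter (fun i : Fin n => (i:ℕ) < u)).card = u := by
    have heq : Finset.univ.filter (fun i : Fin n => (i:ℕ) < u)
        = Finset.univ.filter (fun i : Fin n => 0 ≤ i.val ∧ i.val < u) := by
      apply Finset.filter_congr; intro i _; simp
    rw [heq, card_ico_fin n 0 u hun]; omega
  have hsplit1 : (Finset.univ.filter (fun i : Fin n => blk r s (π i) = 1 ∧ (i:ℕ) < u)).card + (Finset.univ.filter (fun i : Fin n => blk r s (π i) = 1 ∧ ¬ (i:ℕ) < u)).card = s :=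
    (filter_split_card u (fun i : Fin n => blk r s (π i) = 1)).trans htot1
  have hsplit2 : (Finset.univ.filter (fun i : Fin n => blk r s (π i) = 2 ∧ (i:ℕ) < u)).card + (Finset.univ.filter (fun i : Fin n => blk r s (π i) = 2 ∧ ¬ (i:ℕ) < u)).card = t :=
    (filter_split_card u (fun i : Fin n => blk r s (π i) = 2)).trans htot2
  have hsplit1' : (Finset.univ.filter (fun i : Fin n => blk r s i = 1 ∧ (i:ℕ) < u)).card + (Finset.univ.filter (fun i : Fin n => blk r s i = 1 ∧ ¬ (i:ℕ) < u)).card = s :=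
    (filter_split_card u (fun i : Fin n => blk r s i = 1)).trans htot1'
  have hsplit2' : (Finset.univ.filter (fun i : Fin n => blk r s i = 2 ∧ (i:ℕ) < u)).card + (Finset.univ.filter (fun i : Fin n => blk r s i = 2 ∧ ¬ (i:ℕ) < u)).card = t :=
    (filter_split_card u (fun i : Fin n => blk r s i = 2)).trans htot2'
  have hab_le_u : (Finset.univ.filter (fun i : Fin n => blk r s (π i) = 1 ∧ (i:ℕ) < u)).card + (Finset.univ.filter (fun i : Fin n => blk r s (π i) = 2 ∧ (i:ℕ) < u)).card ≤ u := by
    have hdisj : Disjoint (Finset.univ.filter (fun i : Fin n => blk r s (π i) = 1 ∧ (i:ℕ) < u))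
        (Finset.univ.filter (fun i : Fin n => blk r s (π i) = 2 ∧ (i:ℕ) < u)) := by
      rw [Finset.disjoint_left]
      intro x hx hy
      simp only [Finset.mem_filter] at hx hy
      omega
    have hsub : (Finset.univ.filter (fun i : Fin n => blk r s (π i) = 1 ∧ (i:ℕ) < u))
        ∪ (Finset.univ.filter (fun i : Fin n => blk r s (π i) = 2 ∧ (i:ℕ) < u))
        ⊆ Finset.univ.filter (fun i : Fin n => (i:ℕ) < u) := by
      intro x hx
      simp only [Finset.mem_union, Finset.mem_filter, Finset.mem_univ, true_and] at hx ⊢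
      tauto
    have h1 := (Finset.card_union_of_disjoint hdisj).symm
    rw [h1]
    exact le_trans (Finset.card_le_card hsub) (le_of_eq htotL)
  have hu_le : u ≤ r + (Finset.univ.filter (fun i : Fin n => blk r s (π i) = 1 ∧ (i:ℕ) < u)).card + (Finset.univ.filter (fun i : Fin n => blk r s (π i) = 2 ∧ (i:ℕ) < u)).card := by
    have hsub : Finset.univ.filter (fun i : Fin n => (i:ℕ) < u)
        ⊆ (Finset.univ.filter (fun i : Fin n => blk r s (π i) = 0))
        ∪ ((Finset.univ.filter (fun i : Fin n => blk r s (π i) = 1 ∧ (i:ℕ) < u))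
        ∪ (Finset.univ.filter (fun i : Fin n => blk r s (π i) = 2 ∧ (i:ℕ) < u))) := by
      intro x hx
      simp only [Finset.mem_union, Finset.mem_filter, Finset.mem_univ, true_and] at hx ⊢
      rcases blk_mem r s (π x) with h | h | h
      · exact Or.inl h
      · exact Or.inr (Or.inl ⟨h, hx⟩)
      · exact Or.inr (Or.inr ⟨h, hx⟩)
    have h2 := le_trans (le_of_eq htotL.symm) (Finset.card_le_card hsub)
    have h3 := Finset.card_union_le
      (Finset.univ.filter (fun i : Fin n => blk r s (π i) = 0))
      ((Finset.univ.filter (fun i : Fin n => blk r s (π i) = 1 ∧ (i:ℕ) < u))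
        ∪ (Finset.univ.filter (fun i : Fin n => blk r s (π i) = 2 ∧ (i:ℕ) < u)))
    have h4 := Finset.card_union_le
      (Finset.univ.filter (fun i : Fin n => blk r s (π i) = 1 ∧ (i:ℕ) < u))
      (Finset.univ.filter (fun i : Fin n => blk r s (π i) = 2 ∧ (i:ℕ) < u))
    rw [htot0] at h3
    omega
  have hcLval : (Finset.univ.filter (fun i : Fin n => blk r s i = 1 ∧ (i:ℕ) < u)).card = min u (r + s) - r := by
    have heq : Finset.univ.filter (fun i : Fin n => blk r s i = 1 ∧ (i:ℕ) < u)
        = Finset.univ.filter (fun i : Fin n => r ≤ i.val ∧ i.val < min u (r + s)) := by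
      apply Finset.filter_congr; intro i _
      rw [blk_eq_one r s i]
      omega
    rw [heq, card_ico_fin n r (min u (r+s)) (by omega)]
  have hdLval : (Finset.univ.filter (fun i : Fin n => blk r s i = 2 ∧ (i:ℕ) < u)).card = u - (r + s) := by
    have heq : Finset.univ.filter (fun i : Fin n => blk r s i = 2 ∧ (i:ℕ) < u)
        = Finset.univ.filter (fun i : Fin n => r + s ≤ i.val ∧ i.val < u) := by
      apply Finset.filter_congr; intro i _
      rw [blk_eq_two r s i]
    rw [heq, card_ico_fin n (r+s) u hun]
  have Zid := Zval r s u A B hA hB (Equiv.refl (Fin n))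
  simp only [Equiv.refl_apply] at Zid
  have Zpi := Zval r s u A B hA hB π
  rw [Zid, Zpi]
  set xa : ℝ := (((Finset.univ.filter (fun i : Fin n => blk r s (π i) = 1 ∧ (i:ℕ) < u)).card : ℕ) : ℝ) with hxa
  set xar : ℝ := (((Finset.univ.filter (fun i : Fin n => blk r s (π i) = 1 ∧ ¬ (i:ℕ) < u)).card : ℕ) : ℝ) with hxar
  set xb : ℝ := (((Finset.univ.filter (fun i : Fin n => blk r s (π i) = 2 ∧ (i:ℕ) < u)).card : ℕ) : ℝ) with hxb
  set xbr : ℝ := (((Finset.univ.filter (fun i : Fin n => blk r s (π i) = 2 ∧ ¬ (i:ℕ) < u)).card : ℕ) : ℝ) with hxbr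
  set xc : ℝ := (((Finset.univ.filter (fun i : Fin n => blk r s i = 1 ∧ (i:ℕ) < u)).card : ℕ) : ℝ) with hxc
  set xcr : ℝ := (((Finset.univ.filter (fun i : Fin n => blk r s i = 1 ∧ ¬ (i:ℕ) < u)).card : ℕ) : ℝ) with hxcr
  set xd : ℝ := (((Finset.univ.filter (fun i : Fin n => blk r s i = 2 ∧ (i:ℕ) < u)).card : ℕ) : ℝ) with hxd
  set xdr : ℝ := (((Finset.univ.filter (fun i : Fin n => blk r s i = 2 ∧ ¬ (i:ℕ) < u)).card : ℕ) : ℝ) with hxdr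
  have e1 : xa + xar = s := by rw [hxa, hxar]; exact_mod_cast congrArg (Nat.cast : ℕ → ℝ) hsplit1
  have e2 : xb + xbr = t := by rw [hxb, hxbr]; exact_mod_cast congrArg (Nat.cast : ℕ → ℝ) hsplit2
  have e1' : xc + xcr = s := by rw [hxc, hxcr]; exact_mod_cast congrArg (Nat.cast : ℕ → ℝ) hsplit1'
  have e2' : xd + xdr = t := by rw [hxd, hxdr]; exact_mod_cast congrArg (Nat.cast : ℕ → ℝ) hsplit2'
  have ha0 : (0:ℝ) ≤ xa := by rw [hxa]; positivity
  have hb0 : (0:ℝ) ≤ xb := by rw [hxb]; positivity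
  have ha0' : (0:ℝ) ≤ xar := by rw [hxar]; positivity
  have hb0' : (0:ℝ) ≤ xbr := by rw [hxbr]; positivity
  have has : xa ≤ s := by linarith
  have hbt : xb ≤ t := by linarith
  have habu : xa + xb ≤ (u:ℝ) := by rw [hxa, hxb]; exact_mod_cast hab_le_u
  have hura : (u : ℝ) ≤ r + xa + xb := by rw [hxa, hxb]; exact_mod_cast hu_le
  have huvvR : (u : ℝ) ≤ v := by exact_mod_cast huv'
  have hsumR : (r : ℝ) + s + t = u + v := by
    have h : r + s + t = u + v := by omega
    exact_mod_cast h
  change 2 * (xc * xdr + xcr * xd + 2 * (xd * xdr)) ≤ _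
  clear_value xa xar xb xbr xc xcr xd xdr
  rcases le_or_gt u r with hc1 | hc1
  · have f1 : xc = 0 := by
      have h : (Finset.univ.filter (fun i : Fin n => blk r s i = 1 ∧ (i:ℕ) < u)).card = 0 := by omega
      rw [hxc, h]; simp
    have f2 : xd = 0 := by
      have h : (Finset.univ.filter (fun i : Fin n => blk r s i = 2 ∧ (i:ℕ) < u)).card = 0 := by omega
      rw [hxd, h]; simp
    clear hxa hxar hxb hxbr hxc hxcr hxd hxdr Zid Zpi hsplit1 hsplit2 hsplit1' hsplit2' hab_le_u hu_le hcLval hdLval htot1 htot2 htot0 htot1' htot2' htot0' htotL hA hB A B π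
    nlinarith [mul_nonneg ha0 hb0', mul_nonneg ha0' hb0, mul_nonneg hb0 hb0']
  · rcases le_or_gt u (r + s) with hc2 | hc2
    · have f1 : xc = (u:ℝ) - r := by
        have h : (Finset.univ.filter (fun i : Fin n => blk r s i = 1 ∧ (i:ℕ) < u)).card = u - r := by omega
        rw [hxc, h, Nat.cast_sub (le_of_lt hc1)]
      have f2 : xd = 0 := by
        have h : (Finset.univ.filter (fun i : Fin n => blk r s i = 2 ∧ (i:ℕ) < u)).card = 0 := by omega
        rw [hxd, h]; simp
      have f3 : xdr = t := by linarith
      clear hxa hxar hxb hxbr hxc hxcr hxd hxdr Zid Zpi hsplit1 hsplit2 hsplit1' hsplit2' hab_le_u hu_le hcLval hdLval htot1 htot2 htot0 htot1' htot2' htot0' htotL hA hB A B π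
      rcases le_or_gt 0 ((s:ℝ) + t - 2*xa - 2*xb) with h | h
      · nlinarith [mul_nonneg hb0 h,
          mul_nonneg (sub_nonneg.2 (le_trans habu huvvR)) (le_trans hb0 hbt)]
      · nlinarith [mul_nonneg (sub_nonneg.2 hbt) (le_of_lt (neg_pos.2 h)),
          mul_nonneg (le_trans hb0 hbt) (sub_nonneg.2 (le_trans habu huvvR))]
    · have f1 : xc = s := by
        have h : (Finset.univ.filter (fun i : Fin n => blk r s i = 1 ∧ (i:ℕ) < u)).card = s := by omega
        rw [hxc, h]
      have f2 : xd = (u:ℝ) - r - s := by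
        have h : (Finset.univ.filter (fun i : Fin n => blk r s i = 2 ∧ (i:ℕ) < u)).card = u - (r + s) := by omega
        rw [hxd, h, Nat.cast_sub (by omega : r + s ≤ u)]; push_cast; ring
      have f3 : xcr = 0 := by linarith
      clear hxa hxar hxb hxbr hxc hxcr hxd hxdr Zid Zpi hsplit1 hsplit2 hsplit1' hsplit2' hab_le_u hu_le hcLval hdLval htot1 htot2 htot0 htot1' htot2' htot0' htotL hA hB A B π
      nlinarith [mul_nonneg ha0 (sub_nonneg.2 hbt), mul_nonneg hb0 (sub_nonneg.2 has),
        mul_nonneg (sub_nonneg.2 hbt) (sub_nonneg.2 has),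
        mul_nonneg (sub_nonneg.2 hbt) (sub_nonneg.2 hbt),
        mul_nonneg hb0 (sub_nonneg.2 hbt),
        mul_nonneg (sub_nonneg.2 habu) (sub_nonneg.2 hbt)]
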